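/- arXiv:1704.04153 — 4 statements merged into one kernel-verified Lean document; each statement's English description precedes it below -/
import Mathlib

section
/- For a unit vector ψ = Σᵢ cᵢ eᵢ in ℂ^d, the maximum of |⟨ψ, η⟩|² over all unit vectors η supported on at most k-1 basis indices equals exactly the sum of the k-1 largest values among |cᵢ|². Consequently the geometric measure of k-coherence of ψ equals 1 minus the sum of the k-1 largest |cᵢ|². -/
/-!
For `η` supported on `I`, `⟪ψ, η⟫` only sees the truncation of `ψ` to `I`, so Cauchy–Schwarz gives
`‖⟪ψ, η⟫‖² ≤ ∑ i ∈ I, ‖ψ i‖²`, with equality when `η` is the normalised truncation. Enlarging `I`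
to exactly `k - 1` indices only increases the right-hand side, so the maximum over supports of size
at most `k - 1` is the largest such sum. The coherence formula is then `IsGreatest.csSup_eq`.
-/

open Finset

namespace Finset

variable {ι : Type*} [Fintype ι] {n : ℕ}

lemma sum_le_iSup_sum_card_eq {f : ι → ℝ} (hf : ∀ i, 0 ≤ f i) {I : Finset ι} (hI : #I ≤ n)
    (hn : n ≤ Fintype.card ι) :
    ∑ i ∈ I, f i ≤ ⨆ J : {J : Finset ι // #J = n}, ∑ j ∈ J.1, f j := by
  obtain ⟨J, hIJ, -, hJ⟩ := exists_subsuperset_card_eq (subset_univ I) hI (by simpa using hn)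
  calc ∑ i ∈ I, f i ≤ ∑ j ∈ J, f j := sum_le_sum_of_subset_of_nonneg hIJ fun i _ _ => hf i
    _ ≤ _ := le_ciSup (f := fun J : {J : Finset ι // #J = n} => ∑ j ∈ J.1, f j)
      (Finite.bddAbove_range _) ⟨J, hJ⟩

lemma exists_card_eq_sum_eq_iSup (f : ι → ℝ) (hn : n ≤ Fintype.card ι) :
    ∃ J : Finset ι, #J = n ∧ ∑ j ∈ J, f j = ⨆ J : {J : Finset ι // #J = n}, ∑ j ∈ J.1, f j := by
  obtain ⟨J, -, hJ⟩ := exists_subset_card_eq (s := univ) (by simpa using hn)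
  have : Nonempty {J : Finset ι // #J = n} := ⟨⟨J, hJ⟩⟩
  obtain ⟨J₀, hJ₀⟩ := exists_eq_ciSup_of_finite
    (f := fun J : {J : Finset ι // #J = n} => ∑ j ∈ J.1, f j)
  exact ⟨J₀.1, J₀.2, hJ₀⟩

end Finset

namespace EuclideanSpace

variable {𝕜 ι : Type*} [RCLike 𝕜] [DecidableEq ι]

def truncate (J : Finset ι) (ψ : EuclideanSpace 𝕜 ι) : EuclideanSpace 𝕜 ι :=
  WithLp.toLp 2 fun j => if j ∈ J then ψ j else 0

@[simp]
lemma truncate_apply (J : Finset ι) (ψ : EuclideanSpace 𝕜 ι) (j : ι) :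
    truncate J ψ j = if j ∈ J then ψ j else 0 :=
  rfl

variable [Fintype ι]

lemma norm_truncate_sq (J : Finset ι) (ψ : EuclideanSpace 𝕜 ι) :
    ‖truncate J ψ‖ ^ 2 = ∑ j ∈ J, ‖ψ j‖ ^ 2 := by
  rw [EuclideanSpace.norm_sq_eq]
  simp [apply_ite (‖·‖ ^ 2), sum_ite_mem]

lemma inner_truncate_of_support {J : Finset ι} {η : EuclideanSpace 𝕜 ι}
    (hη : ∀ j ∉ J, η j = 0) (ψ : EuclideanSpace 𝕜 ι) :
    inner 𝕜 (truncate J ψ) η = inner 𝕜 ψ η := by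
  rw [PiLp.inner_apply, PiLp.inner_apply]
  refine sum_congr rfl fun j _ => ?_
  by_cases hj : j ∈ J <;> simp [hj, hη]

lemma norm_inner_sq_le_of_support {J : Finset ι} {η : EuclideanSpace 𝕜 ι} (hη₁ : ‖η‖ = 1)
    (hη : ∀ j ∉ J, η j = 0) (ψ : EuclideanSpace 𝕜 ι) :
    ‖inner 𝕜 ψ η‖ ^ 2 ≤ ∑ j ∈ J, ‖ψ j‖ ^ 2 := by
  rw [← inner_truncate_of_support hη, ← norm_truncate_sq]
  gcongr
  simpa [hη₁] using norm_inner_le_norm (𝕜 := 𝕜) (truncate J ψ) η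

/-- The witness is the normalised truncation of `ψ`, or a basis vector of `J` when that
truncation vanishes. -/
lemma exists_norm_inner_sq_eq_of_support {J : Finset ι} (hJ : J.Nonempty)
    (ψ : EuclideanSpace 𝕜 ι) :
    ∃ η : EuclideanSpace 𝕜 ι, ‖η‖ = 1 ∧ (∀ j ∉ J, η j = 0) ∧
      ‖inner 𝕜 ψ η‖ ^ 2 = ∑ j ∈ J, ‖ψ j‖ ^ 2 := by
  rw [← norm_truncate_sq]
  by_cases hφ : truncate J ψ = 0
  · obtain ⟨i, hi⟩ := hJ
    have hψi : ψ i = 0 := by simpa [hi] using congrArg (· i) hφ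
    refine ⟨EuclideanSpace.single i 1, by simp, fun j hj => ?_, ?_⟩
    · simp [show j ≠ i by rintro rfl; exact hj hi]
    · simp [hφ, hψi, EuclideanSpace.inner_single_right]
  · set η := (‖truncate J ψ‖ : 𝕜)⁻¹ • truncate J ψ
    have hη : ∀ j ∉ J, η j = 0 := fun j hj => by simp [η, hj]
    refine ⟨η, norm_smul_inv_norm hφ, hη, ?_⟩
    rw [← inner_truncate_of_support hη, inner_smul_right, inner_self_eq_norm_sq_to_K]
    have : ‖truncate J ψ‖ ≠ 0 := norm_ne_zero_iff.mpr hφ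
    simp only [norm_mul, norm_inv, norm_algebraMap', norm_norm, norm_pow]
    field_simp

theorem isGreatest_norm_inner_sq_of_card_support_le {n : ℕ} (hn₀ : 1 ≤ n)
    (hn : n ≤ Fintype.card ι) (ψ : EuclideanSpace 𝕜 ι) :
    IsGreatest
      {x : ℝ | ∃ η : EuclideanSpace 𝕜 ι, ‖η‖ = 1 ∧
        (∃ I : Finset ι, #I ≤ n ∧ ∀ j ∉ I, η j = 0) ∧ x = ‖inner 𝕜 ψ η‖ ^ 2}
      (⨆ J : {J : Finset ι // #J = n}, ∑ j ∈ J.1, ‖ψ j‖ ^ 2) := by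
  constructor
  · obtain ⟨J, hJn, hJ⟩ := Finset.exists_card_eq_sum_eq_iSup (fun j => ‖ψ j‖ ^ 2) hn
    obtain ⟨η, hη₁, hη, heq⟩ :=
      exists_norm_inner_sq_eq_of_support (card_pos.mp (by omega : 0 < #J)) ψ
    exact ⟨η, hη₁, ⟨J, hJn.le, hη⟩, by rw [heq, hJ]⟩
  · rintro x ⟨η, hη₁, ⟨I, hI, hη⟩, rfl⟩
    exact (norm_inner_sq_le_of_support hη₁ hη ψ).trans
      (Finset.sum_le_iSup_sum_card_eq (fun _ => sq_nonneg _) hI hn)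

end EuclideanSpace

theorem stmt_1_general (d k : ℕ) (hk : 2 ≤ k) (hkd : k ≤ d)
    (ψ : EuclideanSpace ℂ (Fin d)) :
    IsGreatest
      {x : ℝ | ∃ η : EuclideanSpace ℂ (Fin d), ‖η‖ = 1 ∧
        (∃ I : Finset (Fin d), I.card ≤ k - 1 ∧ ∀ j ∉ I, η j = 0) ∧
        x = ‖(inner ℂ ψ η : ℂ)‖ ^ 2}
      (⨆ J : {J : Finset (Fin d) // J.card = k - 1}, ∑ j ∈ J.1, ‖ψ j‖ ^ 2) ∧
    1 - sSup {x : ℝ | ∃ η : EuclideanSpace ℂ (Fin d), ‖η‖ = 1 ∧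
        (∃ I : Finset (Fin d), I.card ≤ k - 1 ∧ ∀ j ∉ I, η j = 0) ∧
        x = ‖(inner ℂ ψ η : ℂ)‖ ^ 2} =
      1 - ⨆ J : {J : Finset (Fin d) // J.card = k - 1}, ∑ j ∈ J.1, ‖ψ j‖ ^ 2 := by
  have h := EuclideanSpace.isGreatest_norm_inner_sq_of_card_support_le (n := k - 1) (by omega)
    (by rw [Fintype.card_fin]; omega) ψ
  exact ⟨h, by rw [h.csSup_eq]⟩

theorem stmt_1 (d k : ℕ) (hk : 2 ≤ k) (hkd : k ≤ d)
    (ψ : EuclideanSpace ℂ (Fin d)) (hψ : ‖ψ‖ = 1) :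
    IsGreatest
      {x : ℝ | ∃ η : EuclideanSpace ℂ (Fin d), ‖η‖ = 1 ∧
        (∃ I : Finset (Fin d), I.card ≤ k - 1 ∧ ∀ j ∉ I, η j = 0) ∧
        x = ‖(inner ℂ ψ η : ℂ)‖ ^ 2}
      (⨆ J : {J : Finset (Fin d) // J.card = k - 1}, ∑ j ∈ J.1, ‖ψ j‖ ^ 2) ∧
    1 - sSup {x : ℝ | ∃ η : EuclideanSpace ℂ (Fin d), ‖η‖ = 1 ∧
        (∃ I : Finset (Fin d), I.card ≤ k - 1 ∧ ∀ j ∉ I, η j = 0) ∧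
        x = ‖(inner ℂ ψ η : ℂ)‖ ^ 2} =
      1 - ⨆ J : {J : Finset (Fin d) // J.card = k - 1}, ∑ j ∈ J.1, ‖ψ j‖ ^ 2 :=
  stmt_1_general d k hk hkd ψ
end

section
/- Let ψ' = Σ_{i=1}^{k} cᵢ eᵢ ⊗ f_i in ℂ^d ⊗ (ℂ²)^{⊗k}, where all cᵢ ≠ 0, k ≥ 2, {eᵢ} is orthonormal in ℂ^d, and f_i = |0⟩^{⊗(i-1)} ⊗ |1⟩ ⊗ |0⟩^{⊗(k-i)}. Then the reduced density matrix of ψ' on any nonempty proper subset of the k qubit factors is not a rank-one projection (i.e., it is a genuinely mixed state). -/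
open scoped BigOperators

/-- The state `ψ' = ∑ i, c i • (e_i ⊗ f_i)` in `ℂ^d ⊗ (ℂ²)^{⊗k}`, written as a
coefficient function on the product basis `Fin d × (Fin k → Fin 2)`, where
`f_i` is the computational basis state with a `1` in position `i` and `0` elsewhere. -/
noncomputable def psiW (d k : ℕ) (hkd : k ≤ d) (c : Fin k → ℂ) :
    Fin d × (Fin k → Fin 2) → ℂ := fun p =>
  ∑ i : Fin k,
    if p.1 = Fin.castLE hkd i ∧ p.2 = (fun t => if t = i then (1 : Fin 2) else 0) then c i
    else 0

/-- Combine an assignment on the qubits in `S` with an assignment on the qubits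
outside `S` into a full assignment. -/
def combineOn {k : ℕ} (S : Finset (Fin k)) (g : {x : Fin k // x ∈ S} → Fin 2)
    (h : {x : Fin k // x ∉ S} → Fin 2) : Fin k → Fin 2 := fun t =>
  if ht : t ∈ S then g ⟨t, ht⟩ else h ⟨t, ht⟩

/-!
Qudit label `i` occurs in `ψ'` only together with the qubit string `f_i`, so tracing out the
qudit kills every coherence between distinct qubit strings: the reduced density matrix on `S`
is diagonal. Choosing `i ∈ S` and `j ∉ S`, the restrictions of `f_i` and `f_j` to `S` are two
distinct strings with positive weight, and a rank-one matrix `v v*` with two nonzero diagonal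
entries has nonzero entries off the diagonal as well.
-/

theorem rankOne_apply_ne_zero {ι R : Type*} [CommSemiring R] [StarRing R] [NoZeroDivisors R]
    {ρ : ι → ι → R} {v : ι → R}
    (hρ : ∀ g g', ρ g g' = v g * starRingEnd R (v g')) {g g' : ι}
    (hg : ρ g g ≠ 0) (hg' : ρ g' g' ≠ 0) : ρ g g' ≠ 0 := by
  rw [hρ] at hg hg' ⊢
  exact mul_ne_zero (left_ne_zero_of_mul hg) (right_ne_zero_of_mul hg')

theorem combineOn_restrict {k : ℕ} (S : Finset (Fin k)) (x : Fin k → Fin 2) :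
    combineOn S (fun t => x t) (fun t => x t) = x := by
  funext t
  by_cases ht : t ∈ S <;> simp [combineOn, ht]

theorem combineOn_left_injective {k : ℕ} {S : Finset (Fin k)}
    {g g' : {x : Fin k // x ∈ S} → Fin 2} {h h' : {x : Fin k // x ∉ S} → Fin 2}
    (he : combineOn S g h = combineOn S g' h') : g = g' := by
  funext t
  simpa [combineOn, t.2] using congrFun he t

section ReducedDensity

variable {𝕜 α : Type*} [RCLike 𝕜] [Fintype α] {k : ℕ}

noncomputable def reducedDensity (ψ : α × (Fin k → Fin 2) → 𝕜) (S : Finset (Fin k))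
    (g g' : {x : Fin k // x ∈ S} → Fin 2) : 𝕜 :=
  ∑ j : α, ∑ h : {x : Fin k // x ∉ S} → Fin 2,
    ψ (j, combineOn S g h) * (starRingEnd 𝕜) (ψ (j, combineOn S g' h))

theorem reducedDensity_self_ne_zero {ψ : α × (Fin k → Fin 2) → 𝕜} {S : Finset (Fin k)}
    {a : α} {g : {x : Fin k // x ∈ S} → Fin 2} {h : {x : Fin k // x ∉ S} → Fin 2}
    (hx : ψ (a, combineOn S g h) ≠ 0) : reducedDensity ψ S g g ≠ 0 := by
  have hreal : reducedDensity ψ S g g =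
      ((∑ j, ∑ h', ‖ψ (j, combineOn S g h')‖ ^ 2 : ℝ) : 𝕜) := by
    simp [reducedDensity, RCLike.mul_conj]
  have hterm : ‖ψ (a, combineOn S g h)‖ ^ 2 ≤ ∑ j, ∑ h', ‖ψ (j, combineOn S g h')‖ ^ 2 :=
    (Finset.single_le_sum (f := fun h' => ‖ψ (a, combineOn S g h')‖ ^ 2)
        (fun _ _ => by positivity) (Finset.mem_univ h)).trans
      (Finset.single_le_sum (f := fun j => ∑ h', ‖ψ (j, combineOn S g h')‖ ^ 2)
        (fun _ _ => by positivity) (Finset.mem_univ a))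
  rw [hreal, RCLike.ofReal_ne_zero]
  exact (lt_of_lt_of_le (by positivity) hterm).ne'

theorem reducedDensity_eq_zero_of_ne {ψ : α × (Fin k → Fin 2) → 𝕜}
    (hψ : ∀ a x y, ψ (a, x) ≠ 0 → ψ (a, y) ≠ 0 → x = y) (S : Finset (Fin k))
    {g g' : {x : Fin k // x ∈ S} → Fin 2} (hg : g ≠ g') : reducedDensity ψ S g g' = 0 := by
  refine Finset.sum_eq_zero fun a _ => Finset.sum_eq_zero fun h _ => ?_
  by_contra hne
  have hx := left_ne_zero_of_mul hne
  have hy : ψ (a, combineOn S g' h) ≠ 0 := by simpa using right_ne_zero_of_mul hne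
  exact hg (combineOn_left_injective (hψ a _ _ hx hy))

end ReducedDensity

section Psi

variable {d k : ℕ} (hkd : k ≤ d) (c : Fin k → ℂ)

theorem psiW_apply (p : Fin d × (Fin k → Fin 2)) :
    psiW d k hkd c p = ∑ i, if p = (Fin.castLE hkd i, Pi.single i 1) then c i else 0 := by
  refine Finset.sum_congr rfl fun i _ => ?_
  simp only [Prod.ext_iff, funext_iff, Pi.single_apply]

theorem psiW_castLE_single (i : Fin k) :
    psiW d k hkd c (Fin.castLE hkd i, Pi.single i 1) = c i := by
  rw [psiW_apply, Finset.sum_eq_single i]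
  · simp
  · intro b _ hb
    simp [Prod.ext_iff, Ne.symm hb]
  · simp

theorem exists_of_psiW_ne_zero {p : Fin d × (Fin k → Fin 2)} (hp : psiW d k hkd c p ≠ 0) :
    ∃ i, p = (Fin.castLE hkd i, Pi.single i 1) := by
  contrapose! hp
  rw [psiW_apply]
  exact Finset.sum_eq_zero fun i _ => if_neg (hp i)

theorem psiW_eq_of_ne_zero (a : Fin d) (x y : Fin k → Fin 2)
    (hx : psiW d k hkd c (a, x) ≠ 0) (hy : psiW d k hkd c (a, y) ≠ 0) : x = y := by
  obtain ⟨i, hi⟩ := exists_of_psiW_ne_zero hkd c hx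
  obtain ⟨i', hi'⟩ := exists_of_psiW_ne_zero hkd c hy
  simp only [Prod.ext_iff] at hi hi'
  obtain rfl : i = i' := Fin.castLE_injective hkd (hi.1.symm.trans hi'.1)
  exact hi.2.trans hi'.2.symm

end Psi

theorem stmt_7_general (d k : ℕ) (hkd : k ≤ d)
    (c : Fin k → ℂ) (hc : ∀ i, c i ≠ 0)
    (S : Finset (Fin k)) (hS : S.Nonempty) (hSne : S ≠ Finset.univ) :
    ¬ ∃ v : ({x : Fin k // x ∈ S} → Fin 2) → ℂ,
        (∑ g : {x : Fin k // x ∈ S} → Fin 2, ‖v g‖ ^ 2 = 1) ∧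
        ∀ g g' : {x : Fin k // x ∈ S} → Fin 2,
          (∑ j : Fin d, ∑ h : {x : Fin k // x ∉ S} → Fin 2,
              psiW d k hkd c (j, combineOn S g h) *
                (starRingEnd ℂ) (psiW d k hkd c (j, combineOn S g' h))) =
            v g * (starRingEnd ℂ) (v g') := by
  rintro ⟨v, -, hv⟩
  obtain ⟨i, hi⟩ := hS
  obtain ⟨j, hj⟩ : ∃ j, j ∉ S := by simpa [Finset.eq_univ_iff_forall] using hSne
  let f (m : Fin k) : Fin k → Fin 2 := Pi.single m 1
  have hdiag (m : Fin k) :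
      reducedDensity (psiW d k hkd c) S (fun t => f m t) (fun t => f m t) ≠ 0 :=
    reducedDensity_self_ne_zero (a := Fin.castLE hkd m) (h := fun t => f m t)
      (by rw [combineOn_restrict, psiW_castLE_single]; exact hc m)
  have hij : (fun t : {x // x ∈ S} => f i t) ≠ fun t : {x // x ∈ S} => f j t :=
    fun he => ne_of_mem_of_not_mem hi hj <| by
      simpa [f, Pi.single_apply] using congrFun he ⟨i, hi⟩
  exact rankOne_apply_ne_zero hv (hdiag i) (hdiag j)
    (reducedDensity_eq_zero_of_ne (psiW_eq_of_ne_zero hkd c) S hij)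

/-- The reduced density matrix of `ψ'` on a nonempty proper subset `S` of the `k`
qubit factors (partial trace over the qudit and the qubits outside `S`) is not a
rank-one projection, i.e. it is a genuinely mixed state. -/
theorem stmt_7 (d k : ℕ) (hk : 2 ≤ k) (hkd : k ≤ d)
    (c : Fin k → ℂ) (hc : ∀ i, c i ≠ 0) (hnorm : ∑ i, ‖c i‖ ^ 2 = 1)
    (S : Finset (Fin k)) (hS : S.Nonempty) (hSne : S ≠ Finset.univ) :
    ¬ ∃ v : ({x : Fin k // x ∈ S} → Fin 2) → ℂ,
        (∑ g : {x : Fin k // x ∈ S} → Fin 2, ‖v g‖ ^ 2 = 1) ∧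
        ∀ g g' : {x : Fin k // x ∈ S} → Fin 2,
          (∑ j : Fin d, ∑ h : {x : Fin k // x ∉ S} → Fin 2,
              psiW d k hkd c (j, combineOn S g h) *
                (starRingEnd ℂ) (psiW d k hkd c (j, combineOn S g' h))) =
            v g * (starRingEnd ℂ) (v g') :=
  stmt_7_general d k hkd c hc S hS hSne
end

section
/- The state ψ' = Σ_{i=1}^{k} cᵢ eᵢ ⊗ |underline(2^{k-i})⟩ with all cᵢ ≠ 0 and k ≥ 2 admits no nontrivial tensor factorization: for any bipartition of the k+1 subsystems (qudit and k qubits) into two nonempty groups, ψ' is not a product vector across that bipartition. -/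
open scoped BigOperators

def oneHot {k : ℕ} (i : Fin k) : Fin k → Fin 2 := fun t => if t = i then 1 else 0

theorem psiW_castLE_apply (d k : ℕ) (hkd : k ≤ d) (c : Fin k → ℂ) (i : Fin k)
    (f : Fin k → Fin 2) :
    psiW d k hkd c (Fin.castLE hkd i, f) = if f = oneHot i then c i else 0 := by
  simp only [psiW, Fin.castLE_inj, ite_and, Finset.sum_ite_eq, Finset.mem_univ, if_true]
  rfl

/-- The support of a product vector is closed under exchanging the factors of two of its
points. -/
theorem apply_ne_zero_of_eq_mul {X α β M₀ : Type*} [MulZeroClass M₀] [NoZeroDivisors M₀]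
    {ψ : X → M₀} {a : α → M₀} {b : β → M₀} {p : X → α} {q : X → β}
    (hψ : ∀ x, ψ x = a (p x) * b (q x)) {x y z : X} (hx : ψ x ≠ 0) (hy : ψ y ≠ 0)
    (hpz : p z = p x) (hqz : q z = q y) : ψ z ≠ 0 := by
  rw [hψ] at hx hy ⊢
  rw [hpz, hqz]
  exact mul_ne_zero (left_ne_zero_of_mul hx) (right_ne_zero_of_mul hy)

-- The qudit lies on one side of every bipartition; `T` is the set of qubits on that side.
theorem stmt_8_general (d k : ℕ) (hk : 2 ≤ k) (hkd : k ≤ d)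
    (c : Fin k → ℂ) (hc : ∀ i, c i ≠ 0)
    (T : Finset (Fin k)) (hT : T ≠ Finset.univ) :
    ¬ ∃ (vA : Fin d × ({x : Fin k // x ∈ T} → Fin 2) → ℂ)
        (vB : ({x : Fin k // x ∉ T} → Fin 2) → ℂ),
        ∀ (j : Fin d) (f : Fin k → Fin 2),
          psiW d k hkd c (j, f) =
            vA (j, fun t => f t.1) * vB (fun t => f t.1) := by
  rintro ⟨vA, vB, h⟩
  obtain ⟨i₀, hi₀⟩ : ∃ i, i ∉ T := by
    simpa [Finset.eq_univ_iff_forall] using hT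
  have : Nontrivial (Fin k) := Fin.nontrivial_iff_two_le.mpr hk
  obtain ⟨i₁, hne⟩ := exists_ne i₀
  -- Crossing the support points of `i₁` and `i₀` gives a point with qudit index `i₁` but qubit
  -- `i₀` equal to `1`, which is outside the support of `ψ'`.
  let f : Fin k → Fin 2 := fun t => if t ∈ T then oneHot i₁ t else oneHot i₀ t
  have hf : f ≠ oneHot i₁ := fun hf => by
    simpa [f, oneHot, hi₀, hne.symm] using congrFun hf i₀
  refine apply_ne_zero_of_eq_mul (fun x => h x.1 x.2)
    (x := (Fin.castLE hkd i₁, oneHot i₁)) (y := (Fin.castLE hkd i₀, oneHot i₀))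
    (z := (Fin.castLE hkd i₁, f)) ?_ ?_ ?_ ?_ ?_
  · simpa [psiW_castLE_apply] using hc i₁
  · simpa [psiW_castLE_apply] using hc i₀
  · refine Prod.ext rfl (funext fun t => ?_)
    simp [f, t.2]
  · funext t
    simp [f, t.2]
  · simp [psiW_castLE_apply, hf]

/-- `ψ'` admits no nontrivial tensor factorization: for every bipartition of the `k+1`
subsystems into the group consisting of the qudit together with the qubits in `T`,
and the (nonempty, i.e. `T ≠ univ`) group of remaining qubits, `ψ'` is not a product
vector across that bipartition.  (Since the qudit lies on one of the two sides, every
bipartition of the `k+1` subsystems is of this form up to swapping the sides.) -/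
theorem stmt_8 (d k : ℕ) (hk : 2 ≤ k) (hkd : k ≤ d)
    (c : Fin k → ℂ) (hc : ∀ i, c i ≠ 0) (hnorm : ∑ i, ‖c i‖ ^ 2 = 1)
    (T : Finset (Fin k)) (hT : T ≠ Finset.univ) :
    ¬ ∃ (vA : Fin d × ({x : Fin k // x ∈ T} → Fin 2) → ℂ)
        (vB : ({x : Fin k // x ∉ T} → Fin 2) → ℂ),
        ∀ (j : Fin d) (f : Fin k → Fin 2),
          psiW d k hkd c (j, f) =
            vA (j, fun t => f t.1) * vB (fun t => f t.1) :=
  stmt_8_general d k hk hkd c hc T hT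
end

section
/- Strong joint concavity of root fidelity for pure-state ensembles: if ρ = Σᵢ aᵢ |αᵢ⟩⟨αᵢ| and σ = Σᵢ bᵢ |βᵢ⟩⟨βᵢ| with aᵢ, bᵢ ≥ 0, then √F(ρ,σ) ≥ Σᵢ √(aᵢ bᵢ) |⟨αᵢ,βᵢ⟩|, where √F(ρ,σ) = Tr√(√ρ σ √ρ). -/
open scoped BigOperators ComplexOrder

/-!
Write `ρ = X Xᴴ` and `σ = Y Yᴴ`, where the columns of `X` and `Y` are `√aᵢ αᵢ` and `√bᵢ βᵢ`; then
the `i`-th diagonal entry of `Xᴴ Y` is `√(aᵢ bᵢ) ⟪αᵢ, βᵢ⟫`. With `S = √ρ` and `T = √(S σ S)`, the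
identities `X Xᴴ = S²` and `(S Y)(S Y)ᴴ = T²` yield factorisations `X = S W` and `S Y = T U` through
contractions `W`, `U`, so `Xᴴ Y = Wᴴ T U`. After choosing phases `cᵢ` with `|cᵢ| ≤ 1`,
`∑ᵢ |(Xᴴ Y)ᵢᵢ| = Re tr (T · U diag(c) Wᴴ) ≤ tr T`, because `Re tr (T C) ≤ ‖C‖ tr T` for `T ≥ 0`.
-/

open Matrix
open scoped MatrixOrder Matrix.Norms.L2Operator

namespace Matrix

variable {m n : Type*} [Fintype m] [Fintype n] [DecidableEq n]

/- By the C⋆-identity, `t = ‖Aᴴ A‖` satisfies `t = t²`. -/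
lemma l2_opNorm_le_one_of_isIdempotentElem_conjTranspose_mul_self {A : Matrix m n ℂ}
    (h : IsIdempotentElem (Aᴴ * A)) : ‖A‖ ≤ 1 := by
  have hsq : ‖Aᴴ * A‖ = ‖Aᴴ * A‖ * ‖Aᴴ * A‖ := by
    conv_lhs => rw [← h.eq]
    rw [← l2_opNorm_conjTranspose_mul_self, conjTranspose_mul, conjTranspose_conjTranspose]
  have hAA : ‖Aᴴ * A‖ ≤ 1 := by nlinarith [norm_nonneg (Aᴴ * A)]
  rw [l2_opNorm_conjTranspose_mul_self] at hAA
  nlinarith [norm_nonneg A]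

lemma re_trace_conjTranspose_mul_mul_le (R : Matrix n m ℂ) (C : Matrix n n ℂ) :
    (Rᴴ * C * R).trace.re ≤ ‖C‖ * (Rᴴ * R).trace.re := by
  simp only [trace, diag, Complex.re_sum, Finset.mul_sum]
  refine Finset.sum_le_sum fun j _ => ?_
  set x : EuclideanSpace ℂ n := WithLp.toLp 2 fun i => R i j
  have hCx : (Rᴴ * C * R) j j = inner ℂ x ((EuclideanSpace.equiv n ℂ).symm (C *ᵥ x)) := by
    simp only [x, mul_apply, conjTranspose_apply, RCLike.star_def, Finset.sum_mul,
      PiLp.continuousLinearEquiv_symm_apply, EuclideanSpace.inner_eq_star_dotProduct, dotProduct,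
      mulVec, Pi.star_apply]
    rw [Finset.sum_comm]
    exact Finset.sum_congr rfl fun _ _ => Finset.sum_congr rfl fun _ _ => by ring
  have hx : (Rᴴ * R) j j = ((‖x‖ ^ 2 : ℝ) : ℂ) := by
    have : (Rᴴ * R) j j = inner ℂ x x := by
      simp only [Matrix.mul_apply, conjTranspose_apply, RCLike.star_def, mul_comm]; rfl
    rw [this, inner_self_eq_norm_sq_to_K]
    norm_cast
  rw [hCx, hx, Complex.ofReal_re]
  calc _ ≤ ‖inner ℂ x ((EuclideanSpace.equiv n ℂ).symm (C *ᵥ x))‖ := Complex.re_le_norm _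
    _ ≤ ‖x‖ * (‖C‖ * ‖x‖) :=
      (norm_inner_le_norm _ _).trans (by gcongr; exact l2_opNorm_mulVec C x)
    _ = ‖C‖ * ‖x‖ ^ 2 := by ring

lemma PosSemidef.re_trace_mul_le {T : Matrix n n ℂ} (hT : T.PosSemidef) (C : Matrix n n ℂ) :
    (T * C).trace.re ≤ ‖C‖ * T.trace.re := by
  obtain ⟨hR, hRR⟩ : (CFC.sqrt T)ᴴ = CFC.sqrt T ∧ CFC.sqrt T * CFC.sqrt T = T :=
    ⟨(CFC.sqrt_nonneg T).posSemidef.1, CFC.sqrt_mul_sqrt_self T hT.nonneg⟩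
  have := re_trace_conjTranspose_mul_mul_le (CFC.sqrt T) C
  rwa [hR, hRR, trace_mul_cycle, hRR] at this

lemma exists_sum_norm_diag_eq (A : Matrix n n ℂ) :
    ∃ c : n → ℂ, ‖c‖ ≤ 1 ∧ ∑ i, ‖A i i‖ = (diagonal c * A).trace.re := by
  refine ⟨fun i => star (A i i) / ‖A i i‖, ?_, ?_⟩
  · refine (pi_norm_le_iff_of_nonneg zero_le_one).mpr fun i => ?_
    rw [norm_div, norm_star, Complex.norm_real, norm_norm]
    exact div_self_le_one _
  · simp only [trace, diag, diagonal_mul, Complex.re_sum]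
    refine Finset.sum_congr rfl fun i _ => ?_
    rw [div_mul_eq_mul_div, RCLike.star_def, Complex.conj_mul', ← Complex.ofReal_pow,
      ← Complex.ofReal_div, Complex.ofReal_re]
    by_cases h : ‖A i i‖ = 0
    · simp [h]
    · field_simp

lemma PosSemidef.spectral_sqrt_eq_sqrt {A : Matrix n n ℂ} (hA : A.PosSemidef) :
    (hA.1.eigenvectorUnitary : Matrix n n ℂ) *
      diagonal (fun j => ((Real.sqrt (hA.1.eigenvalues j) : ℝ) : ℂ)) *
      (star hA.1.eigenvectorUnitary : Matrix n n ℂ) = CFC.sqrt A := by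
  rw [CFC.sqrt_eq_real_sqrt A hA.nonneg, cfcₙ_eq_cfc, hA.1.cfc_eq, IsHermitian.cfc,
    Unitary.conjStarAlgAut_apply]
  rfl

variable [DecidableEq m]

lemma IsHermitian.exists_eq_mul_l2_opNorm_le_one {S : Matrix m m ℂ} (hS : S.IsHermitian)
    {M : Matrix m n ℂ} (hM : M * Mᴴ = S * S) : ∃ W : Matrix m n ℂ, M = S * W ∧ ‖W‖ ≤ 1 := by
  have hS' : IsSelfAdjoint S := hS
  have hcont (f : ℝ → ℝ) : ContinuousOn f (spectrum ℝ S) := S.finite_real_spectrum.continuousOn f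
  have hmul (f g : ℝ → ℝ) : cfc f S * cfc g S = cfc (fun x => f x * g x) S :=
    (cfc_mul f g S (hcont f) (hcont g)).symm
  -- `P` is the pseudo-inverse of `S` and `E = S P` the orthogonal projection onto its range.
  set P := cfc (fun x : ℝ => x⁻¹) S
  set E := cfc (fun x : ℝ => x * x⁻¹) S
  have hSP : S * P = E := by rw [← cfc_id' ℝ S, hmul]
  have hPS : P * S = E := by
    rw [← cfc_id' ℝ S, hmul]; exact cfc_congr fun x _ => mul_comm _ _
  have hES : E * S = S := by
    rw [← cfc_id' ℝ S, hmul]; exact cfc_congr fun x _ => mul_inv_mul_cancel x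
  have hEE : E * E = E := by
    rw [hmul]; exact cfc_congr fun x _ => by by_cases hx : x = 0 <;> simp [hx]
  have hPh : Pᴴ = P := (cfc_predicate _ S : IsSelfAdjoint P)
  have hEM : E * M = M := by
    have : (1 - E) * (M * Mᴴ) = 0 := by
      rw [hM, ← Matrix.mul_assoc, Matrix.sub_mul, hES]; simp
    rw [mul_self_mul_conjTranspose_eq_zero, Matrix.sub_mul, Matrix.one_mul, sub_eq_zero] at this
    exact this.symm
  refine ⟨P * M, by rw [← Matrix.mul_assoc, hSP, hEM], ?_⟩
  have hWW : (P * M)ᴴᴴ * (P * M)ᴴ = E := by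
    rw [conjTranspose_conjTranspose, conjTranspose_mul, hPh, Matrix.mul_assoc,
      ← Matrix.mul_assoc M, hM, ← Matrix.mul_assoc, ← Matrix.mul_assoc, hPS, Matrix.mul_assoc,
      hSP, hEE]
  rw [← l2_opNorm_conjTranspose]
  exact l2_opNorm_le_one_of_isIdempotentElem_conjTranspose_mul_self (hWW ▸ hEE)

end Matrix

noncomputable def rootFidelity {n : Type*} [Fintype n] [DecidableEq n] (ρ σ : Matrix n n ℂ) : ℝ :=
  (CFC.sqrt (CFC.sqrt ρ * σ * CFC.sqrt ρ)).trace.re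

theorem sum_norm_diag_conjTranspose_mul_le_rootFidelity {m k : Type*} [Fintype m] [DecidableEq m]
    [Fintype k] [DecidableEq k] (X Y : Matrix m k ℂ) :
    ∑ i, ‖(Xᴴ * Y) i i‖ ≤ rootFidelity (X * Xᴴ) (Y * Yᴴ) := by
  set S := CFC.sqrt (X * Xᴴ)
  set T := CFC.sqrt (S * (Y * Yᴴ) * S)
  have hS : S.IsHermitian := (CFC.sqrt_nonneg _).posSemidef.1
  have hT : T.PosSemidef := (CFC.sqrt_nonneg _).posSemidef
  have hTT : T * T = S * (Y * Yᴴ) * S := CFC.sqrt_mul_sqrt_self _ <| by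
    simpa only [hS.eq] using
      ((posSemidef_self_mul_conjTranspose Y).conjTranspose_mul_mul_same S).nonneg
  obtain ⟨W, hXW, hW⟩ := hS.exists_eq_mul_l2_opNorm_le_one (M := X)
    (CFC.sqrt_mul_sqrt_self _ (posSemidef_self_mul_conjTranspose X).nonneg).symm
  obtain ⟨U, hSYU, hU⟩ := hT.1.exists_eq_mul_l2_opNorm_le_one (M := S * Y) <| by
    rw [hTT, conjTranspose_mul, hS.eq]; simp only [Matrix.mul_assoc]
  obtain ⟨c, hc, hsum⟩ := exists_sum_norm_diag_eq (Xᴴ * Y)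
  have hXY : Xᴴ * Y = Wᴴ * (T * U) := by
    rw [hXW, conjTranspose_mul, hS.eq, Matrix.mul_assoc, hSYU]
  have hC : ‖U * diagonal c * Wᴴ‖ ≤ 1 := calc
    _ ≤ ‖U‖ * ‖diagonal c‖ * ‖Wᴴ‖ := (l2_opNorm_mul _ _).trans (by gcongr; exact l2_opNorm_mul _ _)
    _ ≤ 1 * 1 * 1 := by gcongr <;> simpa only [l2_opNorm_diagonal, l2_opNorm_conjTranspose]
    _ = 1 := by norm_num
  calc ∑ i, ‖(Xᴴ * Y) i i‖ = (T * (U * diagonal c * Wᴴ)).trace.re := by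
        rw [hsum, hXY, ← Matrix.mul_assoc, trace_mul_comm, Matrix.mul_assoc, Matrix.mul_assoc,
          trace_mul_comm]
    _ ≤ ‖U * diagonal c * Wᴴ‖ * T.trace.re := hT.re_trace_mul_le _
    _ ≤ T.trace.re := mul_le_of_le_one_left (RCLike.nonneg_iff.mp hT.trace_nonneg).1 hC

noncomputable def sqrtWeightedColumns {m k : Type*} (w : k → ℝ) (v : k → EuclideanSpace ℂ m) :
    Matrix m k ℂ :=
  of fun p i => (Real.sqrt (w i) : ℂ) * v i p

lemma sqrtWeightedColumns_mul_conjTranspose {m k : Type*} [Fintype k] {w : k → ℝ}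
    (hw : ∀ i, 0 ≤ w i) (v : k → EuclideanSpace ℂ m) :
    sqrtWeightedColumns w v * (sqrtWeightedColumns w v)ᴴ =
      of fun p q => ∑ i, (w i : ℂ) * v i p * starRingEnd ℂ (v i q) := by
  ext p q
  simp only [sqrtWeightedColumns, mul_apply, conjTranspose_apply, of_apply, star_mul',
    RCLike.star_def, Complex.conj_ofReal]
  refine Finset.sum_congr rfl fun i _ => ?_
  have hsq : (Real.sqrt (w i) : ℂ) * Real.sqrt (w i) = w i := by
    exact_mod_cast Real.mul_self_sqrt (hw i)
  rw [← hsq]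
  ring

lemma norm_conjTranspose_sqrtWeightedColumns_mul_apply {m k : Type*} [Fintype m] {a : k → ℝ}
    (ha : ∀ i, 0 ≤ a i) (b : k → ℝ) (α β : k → EuclideanSpace ℂ m) (i : k) :
    ‖((sqrtWeightedColumns a α)ᴴ * sqrtWeightedColumns b β) i i‖ =
      Real.sqrt (a i * b i) * ‖inner ℂ (α i) (β i)‖ := by
  have : ((sqrtWeightedColumns a α)ᴴ * sqrtWeightedColumns b β) i i =
      (Real.sqrt (a i * b i) : ℂ) * inner ℂ (α i) (β i) := by
    simp only [sqrtWeightedColumns, mul_apply, conjTranspose_apply, of_apply, star_mul',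
      RCLike.star_def, Complex.conj_ofReal, Real.sqrt_mul (ha i), Complex.ofReal_mul,
      EuclideanSpace.inner_eq_star_dotProduct, dotProduct, Finset.mul_sum, Pi.star_apply]
    exact Finset.sum_congr rfl fun p _ => by ring
  rw [this, norm_mul, Complex.norm_real, Real.norm_of_nonneg (Real.sqrt_nonneg _)]

theorem stmt_14_general (m N : ℕ) (a b : Fin N → ℝ) (ha : ∀ i, 0 ≤ a i) (hb : ∀ i, 0 ≤ b i)
    (α β : Fin N → EuclideanSpace ℂ (Fin m))
    (ρ σ : Matrix (Fin m) (Fin m) ℂ)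
    (hρdef : ρ = Matrix.of fun p q => ∑ i, (a i : ℂ) * α i p * (starRingEnd ℂ) (α i q))
    (hσdef : σ = Matrix.of fun p q => ∑ i, (b i : ℂ) * β i p * (starRingEnd ℂ) (β i q))
    (hρ : ρ.PosSemidef)
    (h2 : ((((hρ).1.eigenvectorUnitary : Matrix (Fin m) (Fin m) ℂ) * Matrix.diagonal (fun j => ((Real.sqrt ((hρ).1.eigenvalues j) : ℝ) : ℂ)) * (star (hρ).1.eigenvectorUnitary : Matrix (Fin m) (Fin m) ℂ)) * σ * (((hρ).1.eigenvectorUnitary : Matrix (Fin m) (Fin m) ℂ) * Matrix.diagonal (fun j => ((Real.sqrt ((hρ).1.eigenvalues j) : ℝ) : ℂ)) * (star (hρ).1.eigenvectorUnitary : Matrix (Fin m) (Fin m) ℂ))).PosSemidef) :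
    ∑ i, Real.sqrt (a i * b i) * ‖(inner ℂ (α i) (β i) : ℂ)‖ ≤ ((((h2).1.eigenvectorUnitary : Matrix (Fin m) (Fin m) ℂ) * Matrix.diagonal (fun j => ((Real.sqrt ((h2).1.eigenvalues j) : ℝ) : ℂ)) * (star (h2).1.eigenvectorUnitary : Matrix (Fin m) (Fin m) ℂ)).trace).re := by
  rw [h2.spectral_sqrt_eq_sqrt, hρ.spectral_sqrt_eq_sqrt, hρdef, hσdef,
    ← sqrtWeightedColumns_mul_conjTranspose ha, ← sqrtWeightedColumns_mul_conjTranspose hb]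
  refine (Finset.sum_congr rfl fun i _ => ?_).trans_le
    (sum_norm_diag_conjTranspose_mul_le_rootFidelity (sqrtWeightedColumns a α)
      (sqrtWeightedColumns b β))
  exact (norm_conjTranspose_sqrtWeightedColumns_mul_apply ha b α β i).symm

/-- Strong joint concavity of the root fidelity for pure-state ensembles:
if `ρ = ∑ᵢ aᵢ |αᵢ⟩⟨αᵢ|` and `σ = ∑ᵢ bᵢ |βᵢ⟩⟨βᵢ|`, then
`Tr√(√ρ σ √ρ) ≥ ∑ᵢ √(aᵢ bᵢ) |⟨αᵢ,βᵢ⟩|`. -/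
theorem stmt_14 (m N : ℕ) (a b : Fin N → ℝ) (ha : ∀ i, 0 ≤ a i) (hb : ∀ i, 0 ≤ b i)
    (α β : Fin N → EuclideanSpace ℂ (Fin m))
    (hα : ∀ i, ‖α i‖ = 1) (hβ : ∀ i, ‖β i‖ = 1)
    (ρ σ : Matrix (Fin m) (Fin m) ℂ)
    (hρdef : ρ = Matrix.of fun p q => ∑ i, (a i : ℂ) * α i p * (starRingEnd ℂ) (α i q))
    (hσdef : σ = Matrix.of fun p q => ∑ i, (b i : ℂ) * β i p * (starRingEnd ℂ) (β i q))
    (hρ : ρ.PosSemidef)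
    (h2 : ((((hρ).1.eigenvectorUnitary : Matrix (Fin m) (Fin m) ℂ) * Matrix.diagonal (fun j => ((Real.sqrt ((hρ).1.eigenvalues j) : ℝ) : ℂ)) * (star (hρ).1.eigenvectorUnitary : Matrix (Fin m) (Fin m) ℂ)) * σ * (((hρ).1.eigenvectorUnitary : Matrix (Fin m) (Fin m) ℂ) * Matrix.diagonal (fun j => ((Real.sqrt ((hρ).1.eigenvalues j) : ℝ) : ℂ)) * (star (hρ).1.eigenvectorUnitary : Matrix (Fin m) (Fin m) ℂ))).PosSemidef) :
    ∑ i, Real.sqrt (a i * b i) * ‖(inner ℂ (α i) (β i) : ℂ)‖ ≤ ((((h2).1.eigenvectorUnitary : Matrix (Fin m) (Fin m) ℂ) * Matrix.diagonal (fun j => ((Real.sqrt ((h2).1.eigenvalues j) : ℝ) : ℂ)) * (star (h2).1.eigenvectorUnitary : Matrix (Fin m) (Fin m) ℂ)).trace).re :=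
  stmt_14_general m N a b ha hb α β ρ σ hρdef hσdef hρ h2
end
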